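/- Let n ≥ 2, let K_0 and K_1 be origin-symmetric convex bodies in ℝ^n whose surface area measures are mutually absolutely continuous, set φ = dS_{K_1}/dS_{K_0}, and let K̃_t (t ∈ [0,1]) be their log-Blaschke combination. Then for every u ∈ S^{n-1} and all 0 ≤ t_0 < t_1 ≤ 1 and s ∈ (0,1), vol_{n-1}(P_{u^⊥} K̃_{(1-s)t_0 + s t_1}) ≤ vol_{n-1}(P_{u^⊥} K̃_{t_0})^{1-s} vol_{n-1}(P_{u^⊥} K̃_{t_1})^s; that is, t ↦ log vol_{n-1}(P_{u^⊥} K̃_t) is convex on [0,1], and it is strictly convex unless φ is constant almost everywhere with respect to the measure |u·v| dS_{K_0}(v). -/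

import Mathlib

open MeasureTheory Metric Set Filter Pointwise
open scoped RealInnerProductSpace ENNReal NNReal Topology Pointwise

noncomputable section

/-- Euclidean space `ℝ^n`. -/
abbrev Euc (n : ℕ) : Type := EuclideanSpace ℝ (Fin n)

/-- The unit sphere `S^{n-1}` in `ℝ^n`. -/
abbrev Sph (n : ℕ) := Metric.sphere (0 : Euc n) 1

/-- A convex body: a compact convex set with nonempty interior. -/
def IsConvexBody {n : ℕ} (K : Set (Euc n)) : Prop :=
  Convex ℝ K ∧ IsCompact K ∧ (interior K).Nonempty

/-- An origin-symmetric convex body. -/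
def IsSymmConvexBody {n : ℕ} (K : Set (Euc n)) : Prop :=
  IsConvexBody K ∧ K = -K

/-- The support function `h_K(v) = sup_{x ∈ K} ⟨x, v⟩`. -/
def suppFun {n : ℕ} (K : Set (Euc n)) (v : Euc n) : ℝ :=
  sSup ((fun x => ⟪x, v⟫) '' K)

/-- `S` is the surface area measure of the convex body `K`, characterized by the first
variation of volume: `d/dt|_{t=0⁺} V(K + tL) = ∫_{S^{n-1}} h_L dS` for every convex body `L`. -/
def IsSurfaceAreaMeasure {n : ℕ} (K : Set (Euc n)) (S : Measure (Sph n)) : Prop :=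
  ∀ L : Set (Euc n), IsConvexBody L →
    HasDerivWithinAt (fun t : ℝ => (volume (K + t • L)).toReal)
      (∫ v : Sph n, suppFun L (v : Euc n) ∂S) (Set.Ici (0 : ℝ)) 0

/-- The surface area measure `S_K` of `K` (the unique measure satisfying
`IsSurfaceAreaMeasure K ·`, when it exists). -/
noncomputable def sam {n : ℕ} (K : Set (Euc n)) : Measure (Sph n) := by
  classical exact if h : ∃ S, IsSurfaceAreaMeasure K S then h.choose else 0

/-- `Kt` is the log-Blaschke combination `(1-t)·K₀ #₀ t·K₁`: the origin-symmetric
convex body whose surface area measure is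
`(dS_{K₀}/dμ)^{1-t} (dS_{K₁}/dμ)^t dμ` with `μ = S_{K₀} + S_{K₁}`. -/
def IsLogBlaschkeOf {n : ℕ} (K0 K1 : Set (Euc n)) (t : ℝ) (Kt : Set (Euc n)) : Prop :=
  IsSymmConvexBody Kt ∧
    sam Kt = (sam K0 + sam K1).withDensity (fun v =>
      ((sam K0).rnDeriv (sam K0 + sam K1) v) ^ (1 - t) *
      ((sam K1).rnDeriv (sam K0 + sam K1) v) ^ t)

/-- The geometric-mean body
`K_t = {x : x·v ≤ h_{K₀}(v)^{1-t} h_{K₁}(v)^t for all unit v}`. -/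
def geomMeanBody {n : ℕ} (K0 K1 : Set (Euc n)) (t : ℝ) : Set (Euc n) :=
  {x | ∀ v : Euc n, ‖v‖ = 1 → ⟪x, v⟫ ≤ suppFun K0 v ^ (1 - t) * suppFun K1 v ^ t}

/-- `K0` and `K1` have dilated direct summands: there is a direct sum decomposition
`ℝⁿ = V₁ ⊕ ⋯ ⊕ V_m` and convex bodies `Kᵢ ⊆ Vᵢ` with `K0 = ∑ Kᵢ` and `K1 = ∑ cᵢ • Kᵢ`. -/
def HasDilatedDirectSummands {n : ℕ} (K0 K1 : Set (Euc n)) : Prop :=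
  ∃ (m : ℕ) (V : Fin m → Submodule ℝ (Euc n)) (A : Fin m → Set (Euc n)) (c : Fin m → ℝ),
    iSupIndep V ∧ (⨆ i, V i) = ⊤ ∧
    (∀ i, 0 < c i) ∧
    (∀ i, A i ⊆ (V i : Set (Euc n)) ∧ Convex ℝ (A i) ∧ IsCompact (A i) ∧ (A i).Nonempty) ∧
    K0 = ∑ i, A i ∧ K1 = ∑ i, c i • A i

/-- The `(n-1)`-dimensional volume of the projection of `K` onto `u^⊥`, via the
Cauchy projection formula `vol_{n-1}(P_{u^⊥} K) = (1/2) ∫_{S^{n-1}} |u·v| dS_K(v)`. -/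
def projVol {n : ℕ} (K : Set (Euc n)) (u : Euc n) : ℝ :=
  (1 / 2) * ∫ v : Sph n, |⟪u, (v : Euc n)⟫| ∂(sam K)

/-- `S` is the mixed surface area measure `S(K,…,K,L;·)` with `K` repeated `n-2` times,
characterized by `d/dt|_{t=0⁺} ∫ f dS_{K+tL} = (n-1) ∫ f dS` for continuous `f`. -/
def IsMixedSAM {n : ℕ} (K L : Set (Euc n)) (S : Measure (Sph n)) : Prop :=
  ∀ f : Sph n → ℝ, Continuous f →
    HasDerivWithinAt (fun t : ℝ => ∫ v : Sph n, f v ∂(sam (K + t • L)))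
      (((n : ℝ) - 1) * ∫ v : Sph n, f v ∂S) (Set.Ici (0 : ℝ)) 0

/-- Orthogonal projection of `ℝⁿ` onto the hyperplane `u^⊥` (for a unit vector `u`). -/
def projHyp {n : ℕ} (u : Euc n) (x : Euc n) : Euc n := x - ⟪x, u⟫ • u

/-- The map induced on unit spheres by a linear isometry. -/
def sphereMap {m n : ℕ} (e : Euc m →ₗᵢ[ℝ] Euc n) (v : Sph m) : Sph n :=
  ⟨e v, by
    have h1 : ‖(v : Euc m)‖ = 1 := mem_sphere_zero_iff_norm.mp v.2
    rw [mem_sphere_zero_iff_norm, e.norm_map, h1]⟩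

/-- Rotation of the plane by the angle `π/2` (counterclockwise). -/
def rot (u : Euc 2) : Euc 2 := (EuclideanSpace.equiv (Fin 2) ℝ).symm ![-(u 1), u 0]

/-- Any surface area measure of a symmetric convex body is finite. -/
lemma sam_univ_lt_top {n : ℕ} (hn : 1 ≤ n) {K : Set (Euc n)} (hK : IsSymmConvexBody K) :
    sam K Set.univ < ⊤ := by
  classical
  obtain ⟨⟨hconv, hcomp, hint⟩, hsymm⟩ := hK
  by_cases h : ∃ S, IsSurfaceAreaMeasure K S
  · have hsam : sam K = h.choose := by unfold sam; rw [dif_pos h]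
    set S := h.choose with hSdef
    have hS : IsSurfaceAreaMeasure K S := h.choose_spec
    rw [hsam]
    -- 0 is an interior point
    obtain ⟨x, hx⟩ := hint
    have hxK : -x ∈ K := by
      have : -x ∈ -K := Set.neg_mem_neg.mpr (interior_subset hx)
      rwa [← hsymm] at this
    have h0 : (0 : Euc n) ∈ interior K := by
      have := hconv.combo_interior_self_mem_interior hx hxK (by norm_num : (0:ℝ) < 1/2)
        (by norm_num : (0:ℝ) ≤ 1/2) (by norm_num)
      simpa using this
    obtain ⟨ε, hε, hball⟩ := Metric.mem_nhds_iff.mp (mem_interior_iff_mem_nhds.mp h0)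
    set r : ℝ := ε / 2 with hrdef
    have hr0 : 0 < r := by positivity
    -- lower bound for support function
    have hsupp : ∀ v : Sph n, r ≤ suppFun K (v : Euc n) := by
      intro v
      have hv : ‖(v : Euc n)‖ = 1 := mem_sphere_zero_iff_norm.mp v.2
      have hmem : r • (v : Euc n) ∈ K := by
        apply hball
        rw [mem_ball_zero_iff, norm_smul, hv, mul_one]
        rw [Real.norm_eq_abs, abs_of_pos hr0]
        simpa [hrdef] using by linarith
      have hbdd : BddAbove ((fun x => ⟪x, (v : Euc n)⟫) '' K) :=
        (hcomp.image (continuous_id.inner continuous_const)).bddAbove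
      have : ⟪r • (v : Euc n), (v : Euc n)⟫ = r := by
        rw [real_inner_smul_left, real_inner_self_eq_norm_mul_norm, hv]; ring
      calc r = ⟪r • (v : Euc n), (v : Euc n)⟫ := this.symm
        _ ≤ suppFun K (v : Euc n) := le_csSup hbdd ⟨_, hmem, rfl⟩
    -- compute the derivative of t ↦ vol(K + tK)
    have hbody : IsConvexBody K := ⟨hconv, hcomp, ⟨x, hx⟩⟩
    have hD := hS K hbody
    have hVfin : volume K ≠ ⊤ := hcomp.measure_lt_top.ne
    set V : ℝ := (volume K).toReal with hVdef
    have hg : HasDerivWithinAt (fun t : ℝ => (1+t)^n * V) ((n : ℝ) * V) (Set.Ici 0) 0 := by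
      have h1 : HasDerivAt (fun t : ℝ => (1+t)^n * V)
          (((n : ℕ) : ℝ) * (1+(0:ℝ))^(n-1) * 1 * V) 0 :=
        (((hasDerivAt_id (0:ℝ)).const_add 1).pow n).mul_const V
      simpa using h1.hasDerivWithinAt
    have heq : ∀ t ∈ Set.Ici (0:ℝ), (1+t)^n * V = (volume (K + t • K)).toReal := by
      intro t ht
      have ht' : (0:ℝ) ≤ t := ht
      have hKt : K + t • K = (1+t) • K := by
        rw [hconv.add_smul zero_le_one ht', one_smul]
      rw [hKt, Measure.addHaar_smul_of_nonneg volume (by linarith) K]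
      rw [finrank_euclideanSpace_fin, ENNReal.toReal_mul,
        ENNReal.toReal_ofReal (by positivity)]
    have hD' : HasDerivWithinAt (fun t : ℝ => (volume (K + t • K)).toReal)
        ((n : ℝ) * V) (Set.Ici 0) 0 :=
      hg.congr (fun t ht => (heq t ht).symm) (heq 0 self_mem_Ici).symm
    have huniq : ∫ v : Sph n, suppFun K (v : Euc n) ∂S = (n : ℝ) * V := by
      have e1 := hD.derivWithin (uniqueDiffOn_Ici (0:ℝ) 0 self_mem_Ici)
      have e2 := hD'.derivWithin (uniqueDiffOn_Ici (0:ℝ) 0 self_mem_Ici)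
      rw [← e1, e2]
    have hVpos : 0 < V :=
      ENNReal.toReal_pos (Measure.measure_pos_of_nonempty_interior _ ⟨0, h0⟩).ne' hVfin
    have hInt : Integrable (fun v : Sph n => suppFun K (v : Euc n)) S := by
      by_contra hni
      rw [integral_undef hni] at huniq
      have hn' : (0:ℝ) < (n : ℝ) := by exact_mod_cast hn
      nlinarith
    have hle : ∫⁻ _ : Sph n, ENNReal.ofReal r ∂S
        ≤ ∫⁻ v : Sph n, (‖suppFun K (v : Euc n)‖₊ : ℝ≥0∞) ∂S := by
      refine lintegral_mono fun v => ?_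
      show ENNReal.ofReal r ≤ ‖suppFun K (v : Euc n)‖ₑ
      rw [Real.enorm_eq_ofReal (hr0.le.trans (hsupp v))]
      exact ENNReal.ofReal_le_ofReal (hsupp v)
    rw [lintegral_const] at hle
    have hfin : ∫⁻ v : Sph n, (‖suppFun K (v : Euc n)‖₊ : ℝ≥0∞) ∂S < ⊤ := hInt.2
    have : ENNReal.ofReal r * S Set.univ < ⊤ := lt_of_le_of_lt hle hfin
    refine ENNReal.lt_top_of_mul_ne_top_right this.ne ?_
    simpa using hr0
  · have hsam : sam K = 0 := by unfold sam; rw [dif_neg h]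
    rw [hsam]; simp

/-- pointwise geometric-mean identity in `ℝ≥0∞`. -/
lemma ennreal_geom (a b c : ℝ≥0∞) {t0 t1 s : ℝ} (h00 : 0 ≤ t0) (h01 : t0 ≤ 1)
    (h10 : 0 ≤ t1) (h11 : t1 ≤ 1) (hs0 : 0 ≤ s) (hs1 : s ≤ 1) :
    (c * (a ^ (1-t0) * b ^ t0)) ^ (1-s) * (c * (a ^ (1-t1) * b ^ t1)) ^ s
      = c * (a ^ (1 - ((1-s)*t0+s*t1)) * b ^ ((1-s)*t0+s*t1)) := by
  have h1s : (0:ℝ) ≤ 1 - s := by linarith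
  rw [ENNReal.mul_rpow_of_nonneg _ _ h1s, ENNReal.mul_rpow_of_nonneg _ _ hs0,
      ENNReal.mul_rpow_of_nonneg _ _ h1s, ENNReal.mul_rpow_of_nonneg _ _ hs0,
      ← ENNReal.rpow_mul, ← ENNReal.rpow_mul, ← ENNReal.rpow_mul, ← ENNReal.rpow_mul,
      show (1:ℝ) - ((1-s)*t0+s*t1) = (1-t0)*(1-s) + (1-t1)*s by ring,
      show (1-s)*t0+s*t1 = t0*(1-s) + t1*s by ring,
      ENNReal.rpow_add_of_nonneg _ _ (mul_nonneg (by linarith) h1s) (mul_nonneg (by linarith) hs0),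
      ENNReal.rpow_add_of_nonneg _ _ (mul_nonneg h00 h1s) (mul_nonneg h10 hs0),
      mul_mul_mul_comm]
  conv_rhs => rw [show c = c ^ (1-s) * c ^ s by
        rw [← ENNReal.rpow_add_of_nonneg _ _ h1s hs0]; norm_num]
  ring

/-- A convex function on a convex subset of `ℝ` that is strictly convex at midpoints is
strictly convex. -/
lemma strictConvexOn_of_midpoint {f : ℝ → ℝ} {D : Set ℝ} (hD : Convex ℝ D)
    (hf : ConvexOn ℝ D f)
    (h : ∀ x ∈ D, ∀ y ∈ D, x < y → f ((x+y)/2) < (f x + f y)/2) :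
    StrictConvexOn ℝ D f := by
  have claim : ∀ x ∈ D, ∀ y ∈ D, x < y → ∀ a b : ℝ, 0 < a → 0 < b → a + b = 1 →
      f (a*x+b*y) < a * f x + b * f y := by
    intro x hx y hy hxy a b ha hb hab
    rcases le_or_gt b (1/2) with hble | hbgt
    · have hy' : (1-2*b)*x + (2*b)*y ∈ D := by
        have := hD hx hy (a := 1-2*b) (b := 2*b) (by linarith) (by linarith) (by ring)
        simpa [smul_eq_mul] using this
      have hlt : x < (1-2*b)*x + (2*b)*y := by nlinarith
      have h1 := h x hx _ hy' hlt
      have h2 : f ((1-2*b)*x + (2*b)*y) ≤ (1-2*b) * f x + (2*b) * f y := by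
        have := hf.2 hx hy (show (0:ℝ) ≤ 1-2*b by linarith) (show (0:ℝ) ≤ 2*b by linarith)
          (show (1-2*b) + (2*b) = 1 by ring)
        simpa [smul_eq_mul] using this
      have hmid : (x + ((1-2*b)*x + (2*b)*y))/2 = a*x + b*y := by
        have haa : a = 1-b := by linarith
        rw [haa]; ring
      rw [hmid] at h1
      have haa : a = 1-b := by linarith
      subst haa
      nlinarith [h1, h2]
    · have ha2 : a < 1/2 := by linarith
      have hx' : (2*a)*x + (1-2*a)*y ∈ D := by
        have := hD hx hy (a := 2*a) (b := 1-2*a) (by linarith) (by linarith) (by ring)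
        simpa [smul_eq_mul] using this
      have hlt : (2*a)*x + (1-2*a)*y < y := by nlinarith
      have h1 := h _ hx' y hy hlt
      have h2 : f ((2*a)*x + (1-2*a)*y) ≤ (2*a) * f x + (1-2*a) * f y := by
        have := hf.2 hx hy (show (0:ℝ) ≤ 2*a by linarith) (show (0:ℝ) ≤ 1-2*a by linarith)
          (show (2*a) + (1-2*a) = 1 by ring)
        simpa [smul_eq_mul] using this
      have hmid : (((2*a)*x + (1-2*a)*y) + y)/2 = a*x + b*y := by
        have hbb : b = 1-a := by linarith
        rw [hbb]; ring
      rw [hmid] at h1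
      have hbb : b = 1-a := by linarith
      subst hbb
      nlinarith [h1, h2]
  refine ⟨hD, ?_⟩
  intro x hx y hy hne a b ha hb hab
  rcases hne.lt_or_gt with hxy | hyx
  · simpa [smul_eq_mul] using claim x hx y hy hxy a b ha hb hab
  · have := claim y hy x hx hyx b a hb ha (by linarith)
    simp only [smul_eq_mul]
    rw [add_comm (a*x), add_comm (a * f x)]
    exact this

set_option maxHeartbeats 2000000 in
/-- log-convexity in `t` of the projection volumes of the
log-Blaschke combination, with strict convexity unless the Radon–Nikodym density is
a.e. constant with respect to `|u·v| dS_{K₀}(v)`. -/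
theorem statement13 (n : ℕ) (hn : 2 ≤ n) (K0 K1 : Set (Euc n))
    (hK0 : IsSymmConvexBody K0) (hK1 : IsSymmConvexBody K1)
    (hAC01 : sam K0 ≪ sam K1) (hAC10 : sam K1 ≪ sam K0)
    (Kt : ℝ → Set (Euc n))
    (hKt : ∀ t ∈ Set.Icc (0 : ℝ) 1, IsLogBlaschkeOf K0 K1 t (Kt t)) :
    ∀ u : Euc n, ‖u‖ = 1 →
      (∀ t0 t1 : ℝ, 0 ≤ t0 → t0 < t1 → t1 ≤ 1 → ∀ s ∈ Set.Ioo (0 : ℝ) 1,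
        projVol (Kt ((1 - s) * t0 + s * t1)) u ≤
          projVol (Kt t0) u ^ (1 - s) * projVol (Kt t1) u ^ s) ∧
      ConvexOn ℝ (Set.Icc (0 : ℝ) 1) (fun t => Real.log (projVol (Kt t) u)) ∧
      ((¬ ∃ c : ℝ, ∀ᵐ (v : Sph n)
            ∂((sam K0).withDensity (fun v => ENNReal.ofReal |⟪u, (v : Euc n)⟫|)),
          ((sam K1).rnDeriv (sam K0) v).toReal = c) →
        StrictConvexOn ℝ (Set.Icc (0 : ℝ) 1)
          (fun t => Real.log (projVol (Kt t) u))) := by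
  classical
  intro u hu
  have hn1 : 1 ≤ n := le_trans (by norm_num) hn
  have hfin0 := sam_univ_lt_top hn1 hK0
  have hfin1 := sam_univ_lt_top hn1 hK1
  set S0 := sam K0 with hS0def
  set S1 := sam K1 with hS1def
  set μ : Measure (Sph n) := S0 + S1 with hμdef
  haveI : IsFiniteMeasure S0 := ⟨hfin0⟩
  haveI : IsFiniteMeasure S1 := ⟨hfin1⟩
  haveI : IsFiniteMeasure μ := by rw [hμdef]; infer_instance
  haveI : S0.HaveLebesgueDecomposition μ := Measure.haveLebesgueDecomposition_of_sigmaFinite _ _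
  haveI : S1.HaveLebesgueDecomposition μ := Measure.haveLebesgueDecomposition_of_sigmaFinite _ _
  haveI : S1.HaveLebesgueDecomposition S0 := Measure.haveLebesgueDecomposition_of_sigmaFinite _ _
  haveI : S0.HaveLebesgueDecomposition S1 := Measure.haveLebesgueDecomposition_of_sigmaFinite _ _
  set g0 := S0.rnDeriv μ with hg0def
  set g1 := S1.rnDeriv μ with hg1def
  set ψ := S1.rnDeriv S0 with hψdef
  set w : Sph n → ℝ≥0∞ := fun v => ENNReal.ofReal |⟪u, (v : Euc n)⟫| with hwdef
  have hACμ0 : S0 ≪ μ := Measure.absolutelyContinuous_of_le (Measure.le_add_right le_rfl)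
  have hACμ1 : S1 ≪ μ := Measure.absolutelyContinuous_of_le (Measure.le_add_left le_rfl)
  have hS0d : μ.withDensity g0 = S0 := Measure.withDensity_rnDeriv_eq _ _ hACμ0
  have hS1d : μ.withDensity g1 = S1 := Measure.withDensity_rnDeriv_eq _ _ hACμ1
  have hψd : S0.withDensity ψ = S1 := Measure.withDensity_rnDeriv_eq _ _ hAC10
  have hφd : S1.withDensity (S0.rnDeriv S1) = S0 := Measure.withDensity_rnDeriv_eq _ _ hAC01
  have hg0m : Measurable g0 := Measure.measurable_rnDeriv _ _
  have hg1m : Measurable g1 := Measure.measurable_rnDeriv _ _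
  have hψm : Measurable ψ := Measure.measurable_rnDeriv _ _
  have hφm : Measurable (S0.rnDeriv S1) := Measure.measurable_rnDeriv _ _
  have hinnercont : Continuous fun v : Sph n => |⟪u, (v : Euc n)⟫| :=
    (continuous_const.inner continuous_subtype_val).abs
  have hwm : Measurable w := hinnercont.measurable.ennreal_ofReal
  have hlim1 : ∫⁻ v, g1 v ∂μ ≠ ⊤ := by
    rw [← setLIntegral_univ, ← withDensity_apply _ MeasurableSet.univ, hS1d]
    exact measure_ne_top S1 _
  have hlim0 : ∫⁻ v, g0 v ∂μ ≠ ⊤ := by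
    rw [← setLIntegral_univ, ← withDensity_apply _ MeasurableSet.univ, hS0d]
    exact measure_ne_top S0 _
  have hg1ψ : g1 =ᵐ[μ] g0 * ψ := by
    refine (withDensity_eq_iff hg1m.aemeasurable (hg0m.mul hψm).aemeasurable hlim1).mp ?_
    calc μ.withDensity g1 = S1 := hS1d
      _ = S0.withDensity ψ := hψd.symm
      _ = (μ.withDensity g0).withDensity ψ := by rw [hS0d]
      _ = μ.withDensity (g0 * ψ) := (withDensity_mul μ hg0m hψm).symm
  have hg0φ : g0 =ᵐ[μ] g1 * (S0.rnDeriv S1) := by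
    refine (withDensity_eq_iff hg0m.aemeasurable (hg1m.mul hφm).aemeasurable hlim0).mp ?_
    calc μ.withDensity g0 = S0 := hS0d
      _ = S1.withDensity (S0.rnDeriv S1) := hφd.symm
      _ = (μ.withDensity g1).withDensity (S0.rnDeriv S1) := by rw [hS1d]
      _ = μ.withDensity (g1 * S0.rnDeriv S1) := (withDensity_mul μ hg1m hφm).symm
  have hz01 : ∀ᵐ v ∂μ, (g0 v = 0 → g1 v = 0) := by
    filter_upwards [hg1ψ] with v hv h0
    rw [hv, Pi.mul_apply, h0, zero_mul]
  have hz10 : ∀ᵐ v ∂μ, (g1 v = 0 → g0 v = 0) := by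
    filter_upwards [hg0φ] with v hv h0
    rw [hv, Pi.mul_apply, h0, zero_mul]
  set ρ : ℝ → Sph n → ℝ≥0∞ := fun t v => g0 v ^ (1-t) * g1 v ^ t with hρdef
  have hρm : ∀ t, Measurable (ρ t) := fun t =>
    (hg0m.pow measurable_const).mul (hg1m.pow measurable_const)
  set L : ℝ → ℝ≥0∞ := fun t => ∫⁻ v, w v * ρ t v ∂μ with hLdef
  have hsamKt : ∀ t ∈ Set.Icc (0:ℝ) 1, sam (Kt t) = μ.withDensity (ρ t) :=
    fun t ht => (hKt t ht).2
  have hw1 : ∀ v : Sph n, w v ≤ 1 := by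
    intro v
    refine ENNReal.ofReal_le_one.mpr ?_
    calc |⟪u, (v : Euc n)⟫| ≤ ‖u‖ * ‖(v : Euc n)‖ := abs_real_inner_le_norm _ _
      _ = 1 := by rw [hu, mem_sphere_zero_iff_norm.mp v.2, mul_one]
  have hLwd : ∀ t : ℝ, L t = ∫⁻ v, w v ∂(μ.withDensity (ρ t)) := by
    intro t
    rw [lintegral_withDensity_eq_lintegral_mul μ (hρm t) hwm]
    exact lintegral_congr fun v => mul_comm _ _
  have hLfin : ∀ t ∈ Set.Icc (0:ℝ) 1, L t ≠ ⊤ := by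
    intro t ht
    rw [hLwd t]
    refine ne_top_of_le_ne_top ?_ (lintegral_mono fun v => hw1 v)
    rw [lintegral_one, ← hsamKt t ht]
    exact (sam_univ_lt_top hn1 (hKt t ht).1).ne
  have hL : ∀ t ∈ Set.Icc (0:ℝ) 1, projVol (Kt t) u = 1/2 * (L t).toReal := by
    intro t ht
    have key : ∫ v : Sph n, |⟪u, (v : Euc n)⟫| ∂(sam (Kt t)) = (L t).toReal := by
      rw [hsamKt t ht,
        integral_eq_lintegral_of_nonneg_ae (ae_of_all _ fun v => abs_nonneg _)
          hinnercont.aestronglyMeasurable]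
      congr 1
      exact (hLwd t).symm
    show (1/2 : ℝ) * ∫ v : Sph n, |⟪u, (v : Euc n)⟫| ∂(sam (Kt t)) = 1/2 * (L t).toReal
    rw [key]
  -- Hölder inequality for L
  have hHolder : ∀ x ∈ Set.Icc (0:ℝ) 1, ∀ y ∈ Set.Icc (0:ℝ) 1, ∀ s : ℝ, 0 < s → s < 1 →
      L ((1-s)*x + s*y) ≤ L x ^ (1-s) * L y ^ s := by
    intro x hx y hy s hs0 hs1
    have h1s : (0:ℝ) < 1 - s := by linarith
    have hpq : Real.HolderConjugate (1-s)⁻¹ s⁻¹ :=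
      Real.holderConjugate_iff.mpr ⟨one_lt_inv_iff₀.mpr ⟨h1s, by linarith⟩, by rw [inv_inv, inv_inv]; ring⟩
    have key := ENNReal.lintegral_mul_le_Lp_mul_Lq μ hpq
      (f := fun v => (w v * ρ x v) ^ (1-s)) (g := fun v => (w v * ρ y v) ^ s)
      ((hwm.mul (hρm x)).pow measurable_const).aemeasurable
      ((hwm.mul (hρm y)).pow measurable_const).aemeasurable
    have e1 : ∀ v : Sph n, ((w v * ρ x v) ^ (1-s)) ^ (1-s)⁻¹ = w v * ρ x v := fun v => by
      rw [← ENNReal.rpow_mul, mul_inv_cancel₀ h1s.ne', ENNReal.rpow_one]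
    have e2 : ∀ v : Sph n, ((w v * ρ y v) ^ s) ^ s⁻¹ = w v * ρ y v := fun v => by
      rw [← ENNReal.rpow_mul, mul_inv_cancel₀ hs0.ne', ENNReal.rpow_one]
    calc L ((1-s)*x + s*y)
        = ∫⁻ v, ((fun v => (w v * ρ x v) ^ (1-s)) * fun v => (w v * ρ y v) ^ s) v ∂μ := by
          refine lintegral_congr fun v => ?_
          simp only [Pi.mul_apply, hρdef]
          exact (ennreal_geom (g0 v) (g1 v) (w v) hx.1 hx.2 hy.1 hy.2 hs0.le hs1.le).symm
      _ ≤ (∫⁻ v, ((w v * ρ x v) ^ (1-s)) ^ (1-s)⁻¹ ∂μ) ^ (1/(1-s)⁻¹)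
            * (∫⁻ v, ((w v * ρ y v) ^ s) ^ s⁻¹ ∂μ) ^ (1/s⁻¹) := key
      _ = L x ^ (1-s) * L y ^ s := by
          rw [one_div, one_div, inv_inv, inv_inv]
          congr 2
          · exact lintegral_congr e1
          · exact lintegral_congr e2
  -- real-level core inequality
  have RL : ∀ x ∈ Set.Icc (0:ℝ) 1, ∀ y ∈ Set.Icc (0:ℝ) 1, ∀ s : ℝ, 0 < s → s < 1 →
      projVol (Kt ((1-s)*x+s*y)) u ≤ projVol (Kt x) u ^ (1-s) * projVol (Kt y) u ^ s := by
    intro x hx y hy s hs0 hs1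
    have hmem : (1-s)*x+s*y ∈ Set.Icc (0:ℝ) 1 :=
      ⟨by nlinarith [hx.1, hy.1], by nlinarith [hx.2, hy.2]⟩
    have hH := hHolder x hx y hy s hs0 hs1
    have hRne : L x ^ (1-s) * L y ^ s ≠ ⊤ :=
      ENNReal.mul_ne_top (ENNReal.rpow_ne_top_of_nonneg (by linarith) (hLfin x hx))
        (ENNReal.rpow_ne_top_of_nonneg hs0.le (hLfin y hy))
    have h2 := ENNReal.toReal_mono hRne hH
    rw [ENNReal.toReal_mul, ← ENNReal.toReal_rpow, ← ENNReal.toReal_rpow] at h2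
    rw [hL _ hmem, hL _ hx, hL _ hy]
    have hhalf : ((1:ℝ)/2) ^ (1-s) * (1/2) ^ s = 1/2 := by
      rw [← Real.rpow_add (by norm_num : (0:ℝ) < 1/2)]
      norm_num
    rw [Real.mul_rpow (by norm_num) ENNReal.toReal_nonneg,
      Real.mul_rpow (by norm_num) ENNReal.toReal_nonneg, mul_mul_mul_comm, hhalf]
    exact mul_le_mul_of_nonneg_left h2 (by norm_num)
  by_cases hZ : (fun v => w v * g0 v) =ᵐ[μ] 0
  · -- degenerate case: all projection volumes vanish
    have hA0 : ∀ t ∈ Set.Icc (0:ℝ) 1, L t = 0 := by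
      intro t ht
      simp only [hLdef]
      refine (lintegral_eq_zero_iff (hwm.mul (hρm t))).mpr ?_
      filter_upwards [hZ, hz01] with v hv h01
      have hv' : w v * g0 v = 0 := hv
      show w v * ρ t v = 0
      rcases mul_eq_zero.mp hv' with hw0 | hg00
      · rw [hw0, zero_mul]
      · have hg10 : g1 v = 0 := h01 hg00
        have hρ0 : ρ t v = 0 := by
          simp only [hρdef]
          rcases lt_or_eq_of_le ht.2 with h | h
          · rw [ENNReal.rpow_eq_zero_iff.mpr (Or.inl ⟨hg00, by linarith⟩), zero_mul]
          · subst h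
            rw [hg10, ENNReal.rpow_one, mul_zero]
        rw [hρ0, mul_zero]
    have hP0 : ∀ t ∈ Set.Icc (0:ℝ) 1, projVol (Kt t) u = 0 := by
      intro t ht
      rw [hL t ht, hA0 t ht]
      simp
    refine ⟨?_, ?_, ?_⟩
    · intro t0 t1 h0 h01 h1 s hs
      exact RL t0 ⟨h0, le_trans h01.le h1⟩ t1 ⟨le_trans h0 h01.le, h1⟩ s hs.1 hs.2
    · refine ⟨convex_Icc 0 1, ?_⟩
      intro p hp q hq a b ha hb hab
      have hm := (convex_Icc (0:ℝ) 1) hp hq ha hb hab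
      simp only [smul_eq_mul] at hm ⊢
      rw [hP0 _ hm, hP0 p hp, hP0 q hq]
      simp
    · intro hne
      exfalso
      apply hne
      have hν0 : S0.withDensity w = 0 := by
        rw [← hS0d, ← withDensity_mul μ hg0m hwm]
        apply Measure.measure_univ_eq_zero.mp
        rw [withDensity_apply _ MeasurableSet.univ, setLIntegral_univ]
        refine (lintegral_eq_zero_iff (hg0m.mul hwm)).mpr ?_
        filter_upwards [hZ] with v hv
        have hv' : w v * g0 v = 0 := hv
        show g0 v * w v = 0
        rw [mul_comm]
        exact hv'
      refine ⟨0, ?_⟩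
      have key : ∀ᵐ (v : Sph n) ∂(S0.withDensity w), (ψ v).toReal = 0 := by
        rw [hν0]
        simp
      exact key
  · -- nondegenerate case
    have hLpos : ∀ t ∈ Set.Icc (0:ℝ) 1, L t ≠ 0 := by
      intro t ht h0
      apply hZ
      simp only [hLdef] at h0
      have h00 := (lintegral_eq_zero_iff (hwm.mul (hρm t))).mp h0
      filter_upwards [h00, hz10] with v hv h10
      have hv' : w v * ρ t v = 0 := hv
      show w v * g0 v = 0
      rcases mul_eq_zero.mp hv' with hw0 | hρ0
      · rw [hw0, zero_mul]
      · simp only [hρdef] at hρ0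
        rcases mul_eq_zero.mp hρ0 with h | h
        · rcases ENNReal.rpow_eq_zero_iff.mp h with ⟨h', _⟩ | ⟨_, hneg⟩
          · rw [h', mul_zero]
          · exact absurd hneg (not_lt.mpr (by linarith [ht.2]))
        · rcases ENNReal.rpow_eq_zero_iff.mp h with ⟨h', _⟩ | ⟨_, hneg⟩
          · rw [h10 h', mul_zero]
          · exact absurd hneg (not_lt.mpr (by linarith [ht.1]))
    have hApos : ∀ t ∈ Set.Icc (0:ℝ) 1, 0 < projVol (Kt t) u := by
      intro t ht
      rw [hL t ht]
      have := ENNReal.toReal_pos (hLpos t ht) (hLfin t ht)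
      linarith
    have hconv2 : ConvexOn ℝ (Set.Icc (0:ℝ) 1) (fun t => Real.log (projVol (Kt t) u)) := by
      refine ⟨convex_Icc 0 1, ?_⟩
      intro p hp q hq a b ha hb hab
      have hm : a*p + b*q ∈ Set.Icc (0:ℝ) 1 := by
        have := (convex_Icc (0:ℝ) 1) hp hq ha hb hab
        simpa [smul_eq_mul] using this
      simp only [smul_eq_mul]
      rcases eq_or_lt_of_le ha with ha0 | ha0
      · have hb1 : b = 1 := by linarith
        rw [← ha0, hb1]; simp
      rcases eq_or_lt_of_le hb with hb0 | hb0
      · have ha1 : a = 1 := by linarith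
        rw [← hb0, ha1]; simp
      rcases lt_trichotomy p q with hpq | hpq | hpq
      · have hRL := RL p hp q hq b hb0 (by linarith)
        rw [show (1:ℝ)-b = a by linarith] at hRL
        calc Real.log (projVol (Kt (a*p+b*q)) u)
            ≤ Real.log (projVol (Kt p) u ^ a * projVol (Kt q) u ^ b) :=
              Real.log_le_log (hApos _ hm) hRL
          _ = a * Real.log (projVol (Kt p) u) + b * Real.log (projVol (Kt q) u) := by
              rw [Real.log_mul (Real.rpow_pos_of_pos (hApos p hp) a).ne'
                  (Real.rpow_pos_of_pos (hApos q hq) b).ne',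
                Real.log_rpow (hApos p hp), Real.log_rpow (hApos q hq)]
      · subst hpq
        rw [show a*p+b*p = p by linear_combination p * hab]
        have : a * Real.log (projVol (Kt p) u) + b * Real.log (projVol (Kt p) u)
            = Real.log (projVol (Kt p) u) := by
          linear_combination (Real.log (projVol (Kt p) u)) * hab
        rw [this]
      · have hRL := RL q hq p hp a ha0 (by linarith)
        rw [show (1:ℝ)-a = b by linarith] at hRL
        have hm' : b*q + a*p ∈ Set.Icc (0:ℝ) 1 := by
          rwa [show b*q+a*p = a*p+b*q by ring]
        have step : Real.log (projVol (Kt (b*q+a*p)) u)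
            ≤ b * Real.log (projVol (Kt q) u) + a * Real.log (projVol (Kt p) u) := by
          calc Real.log (projVol (Kt (b*q+a*p)) u)
              ≤ Real.log (projVol (Kt q) u ^ b * projVol (Kt p) u ^ a) :=
                Real.log_le_log (hApos _ hm') hRL
            _ = b * Real.log (projVol (Kt q) u) + a * Real.log (projVol (Kt p) u) := by
                rw [Real.log_mul (Real.rpow_pos_of_pos (hApos q hq) b).ne'
                    (Real.rpow_pos_of_pos (hApos p hp) a).ne',
                  Real.log_rpow (hApos q hq), Real.log_rpow (hApos p hp)]
        rw [show a*p+b*q = b*q+a*p by ring]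
        linarith
    refine ⟨?_, hconv2, ?_⟩
    · intro t0 t1 h0 h01 h1 s hs
      exact RL t0 ⟨h0, le_trans h01.le h1⟩ t1 ⟨le_trans h0 h01.le, h1⟩ s hs.1 hs.2
    intro hne
    set ν : Measure (Sph n) := S0.withDensity w with hνdef
    have hνAC : ν ≪ S0 := withDensity_absolutelyContinuous _ _
    have hψfinν : ∀ᵐ v ∂ν, ψ v ≠ ⊤ :=
      Filter.Eventually.filter_mono hνAC.ae_le
        ((Measure.rnDeriv_lt_top S1 S0).mono fun v h => h.ne)
    have hψposν : ∀ᵐ v ∂ν, 0 < ψ v :=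
      Filter.Eventually.filter_mono hνAC.ae_le
        (Filter.Eventually.filter_mono hAC01.ae_le (Measure.rnDeriv_pos hAC10))
    have hLν : ∀ t ∈ Set.Icc (0:ℝ) 1, L t = ∫⁻ v, ψ v ^ t ∂ν := by
      intro t ht
      rw [hνdef, ← hS0d, ← withDensity_mul μ hg0m hwm,
        lintegral_withDensity_eq_lintegral_mul μ
          (show Measurable (g0 * w) from hg0m.mul hwm) (hψm.pow measurable_const)]
      simp only [hLdef]
      refine lintegral_congr_ae ?_
      filter_upwards [hg1ψ] with v hv
      rw [Pi.mul_apply] at hv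
      simp only [hρdef, Pi.mul_apply]
      calc w v * (g0 v ^ (1-t) * g1 v ^ t)
          = w v * (g0 v ^ (1-t) * (g0 v ^ t * ψ v ^ t)) := by
            rw [hv, ENNReal.mul_rpow_of_nonneg _ _ ht.1]
        _ = w v * ((g0 v ^ (1-t) * g0 v ^ t) * ψ v ^ t) := by ring
        _ = w v * (g0 v ^ ((1-t)+t) * ψ v ^ t) := by
            rw [ENNReal.rpow_add_of_nonneg _ _ (by linarith [ht.2]) ht.1]
        _ = g0 v * w v * ψ v ^ t := by
            rw [show (1:ℝ)-t+t = 1 by ring, ENNReal.rpow_one]; ring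
    set q : Sph n → ℝ := fun v => (ψ v).toReal with hqdef
    have hqm : Measurable q := hψm.ennreal_toReal
    have hqig : ∀ t ∈ Set.Icc (0:ℝ) 1,
        (∫ v, q v ^ t ∂ν = (L t).toReal) ∧ Integrable (fun v => q v ^ t) ν := by
      intro t ht
      have hmeas : Measurable fun v : Sph n => q v ^ t := hqm.pow measurable_const
      have hofReal : ∀ᵐ v ∂ν, ENNReal.ofReal (q v ^ t) = ψ v ^ t := by
        filter_upwards [hψfinν] with v hv
        simp only [hqdef]
        rw [← ENNReal.ofReal_rpow_of_nonneg ENNReal.toReal_nonneg ht.1,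
          ENNReal.ofReal_toReal hv]
      have hlin : ∫⁻ v, ENNReal.ofReal (q v ^ t) ∂ν = L t := by
        rw [lintegral_congr_ae hofReal, hLν t ht]
      refine ⟨?_, ?_⟩
      · rw [integral_eq_lintegral_of_nonneg_ae
          (ae_of_all _ fun v => Real.rpow_nonneg ENNReal.toReal_nonneg t)
          hmeas.aestronglyMeasurable, hlin]
      · refine ⟨hmeas.aestronglyMeasurable, ?_⟩
        show (∫⁻ v, (‖q v ^ t‖₊ : ℝ≥0∞) ∂ν) < ⊤
        have hnn : ∀ v : Sph n, (‖q v ^ t‖₊ : ℝ≥0∞) = ENNReal.ofReal (q v ^ t) := fun v =>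
          Real.enorm_eq_ofReal (Real.rpow_nonneg ENNReal.toReal_nonneg t)
        rw [lintegral_congr hnn, hlin]
        exact (hLfin t ht).lt_top
    have hmid : ∀ x ∈ Set.Icc (0:ℝ) 1, ∀ y ∈ Set.Icc (0:ℝ) 1, x < y →
        Real.log (projVol (Kt ((x+y)/2)) u)
          < (Real.log (projVol (Kt x) u) + Real.log (projVol (Kt y) u))/2 := by
      intro x hx y hy hxy
      have hm : (x+y)/2 ∈ Set.Icc (0:ℝ) 1 :=
        ⟨by linarith [hx.1, hy.1], by linarith [hx.2, hy.2]⟩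
      have hRL := RL x hx y hy (1/2) (by norm_num) (by norm_num)
      rw [show (1-(1/2:ℝ))*x + (1/2)*y = (x+y)/2 by ring] at hRL
      rcases lt_or_eq_of_le hRL with hlt | heq
      · have h1 := Real.log_lt_log (hApos _ hm) hlt
        rw [Real.log_mul (Real.rpow_pos_of_pos (hApos x hx) _).ne'
            (Real.rpow_pos_of_pos (hApos y hy) _).ne',
          Real.log_rpow (hApos x hx), Real.log_rpow (hApos y hy)] at h1
        norm_num at h1 ⊢
        linarith
      · exfalso
        have hprod : (L ((x+y)/2)).toReal * (L ((x+y)/2)).toReal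
            = (L x).toReal * (L y).toReal := by
          have h1 : projVol (Kt ((x+y)/2)) u * projVol (Kt ((x+y)/2)) u
              = projVol (Kt x) u * projVol (Kt y) u := by
            rw [heq, mul_mul_mul_comm, ← Real.rpow_add (hApos x hx),
              ← Real.rpow_add (hApos y hy)]
            norm_num
          rw [hL _ hm, hL _ hx, hL _ hy] at h1
          linear_combination 4 * h1
        obtain ⟨hIx, hIntx⟩ := hqig x hx
        obtain ⟨hIy, hInty⟩ := hqig y hy
        obtain ⟨hIm, hIntm⟩ := hqig ((x+y)/2) hm
        have hIxpos : 0 < (L x).toReal := ENNReal.toReal_pos (hLpos x hx) (hLfin x hx)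
        set c : ℝ := (L ((x+y)/2)).toReal / (L x).toReal with hcdef
        have hqpos : ∀ᵐ v ∂ν, 0 < q v := by
          filter_upwards [hψposν, hψfinν] with v h1 h2
          exact ENNReal.toReal_pos h1.ne' h2
        have hexp : (fun v => (c * q v ^ (x/2) - q v ^ (y/2))^2)
            =ᵐ[ν] (fun v => c^2 * q v ^ x - 2*c * q v ^ ((x+y)/2) + q v ^ y) := by
          filter_upwards [hqpos] with v hv
          have e1 : q v ^ (x/2) * q v ^ (x/2) = q v ^ x := by
            rw [← Real.rpow_add hv]; norm_num
          have e2 : q v ^ (y/2) * q v ^ (y/2) = q v ^ y := by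
            rw [← Real.rpow_add hv]; norm_num
          have e3 : q v ^ (x/2) * q v ^ (y/2) = q v ^ ((x+y)/2) := by
            rw [← Real.rpow_add hv]; ring_nf
          show (c * q v ^ (x/2) - q v ^ (y/2))^2
              = c^2 * q v ^ x - 2*c * q v ^ ((x+y)/2) + q v ^ y
          rw [← e1, ← e2, ← e3]; ring
        have hDint : Integrable (fun v => (c * q v ^ (x/2) - q v ^ (y/2))^2) ν :=
          (((hIntx.const_mul (c^2)).sub (hIntm.const_mul (2*c))).add hInty).congr hexp.symm
        have I2 : Integrable (fun v => c^2 * q v ^ x) ν := hIntx.const_mul _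
        have I3 : Integrable (fun v => 2*c * q v ^ ((x+y)/2)) ν := hIntm.const_mul _
        have I1 : Integrable (fun v => c^2 * q v ^ x - 2*c * q v ^ ((x+y)/2)) ν := I2.sub I3
        have hDzero : ∫ v, (c * q v ^ (x/2) - q v ^ (y/2))^2 ∂ν = 0 := by
          rw [integral_congr_ae hexp, integral_add I1 hInty, integral_sub I2 I3,
            integral_const_mul, integral_const_mul, hIx, hIy, hIm, hcdef]
          field_simp
          linear_combination (-1 : ℝ) * hprod
        have hD0 : (fun v => (c * q v ^ (x/2) - q v ^ (y/2))^2) =ᵐ[ν] 0 :=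
          (integral_eq_zero_iff_of_nonneg (fun v => sq_nonneg _) hDint).mp hDzero
        have hconst : ∀ᵐ v ∂ν, q v = c ^ (2/(y-x)) := by
          filter_upwards [hD0, hqpos] with v h0 hv
          have h0' : (c * q v ^ (x/2) - q v ^ (y/2))^2 = 0 := h0
          have h1 : c * q v ^ (x/2) = q v ^ (y/2) := by
            have := (pow_eq_zero_iff (two_ne_zero)).mp h0'
            linarith [this]
          have h2 : q v ^ ((y-x)/2) = c := by
            have hx2 : q v ^ (x/2) ≠ 0 := (Real.rpow_pos_of_pos hv _).ne'
            have h3 : q v ^ (y/2) / q v ^ (x/2) = c := by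
              rw [← h1, mul_div_assoc, div_self hx2, mul_one]
            rw [← h3, ← Real.rpow_sub hv]
            congr 1; ring
          have hyx : y - x ≠ 0 := sub_ne_zero.mpr (ne_of_gt hxy)
          rw [← h2, ← Real.rpow_mul hv.le,
            show (y-x)/2 * (2/(y-x)) = 1 by field_simp, Real.rpow_one]
        exact hne ⟨c ^ (2/(y-x)), hconst⟩
    exact strictConvexOn_of_midpoint (convex_Icc 0 1) hconv2 hmid
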